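/- Let R be a *-ring, p, q projectors with p - q Moore-Penrose invertible, and H = (p-q)(p-q)†. Then qH = Hq. -/

import Mathlib

/-- `b` is a Moore-Penrose inverse of `a`. -/
def IsMP {R : Type*} [Ring R] [StarRing R] (a b : R) : Prop :=
  a * b * a = a ∧ b * a * b = b ∧ star (a * b) = a * b ∧ star (b * a) = b * a

/-- `p` is a projector: `p² = p = p*`. -/
def IsProjector {R : Type*} [Ring R] [StarRing R] (p : R) : Prop :=
  p * p = p ∧ star p = p

/-- `a` is *-cancellable. -/
def StarCancellable {R : Type*} [Ring R] [StarRing R] (a : R) : Prop :=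
  (∀ x : R, star a * a * x = 0 → a * x = 0) ∧ (∀ x : R, x * (a * star a) = 0 → x * a = 0)

/-!
Put `a = p - q` and `d = (p - q)†`. Since `a` is self-adjoint so is `d`, hence `a` and `d`
commute and `d²` is the group inverse of `a²`, which gives `H = a d = a² d²`. Expanding with
`p² = p`, `q² = q` yields `q a² = q - q p q = a² q`, and anything commuting with an element
commutes with its group inverse.
-/

theorem Commute.of_groupInverse {M : Type*} [Monoid M] {b c x : M}
    (hbcb : b * c * b = b) (hcbc : c * b * c = c) (hbc : Commute b c) (hx : Commute x b) :
    Commute x c := by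
  have hc_left : c * (c * b) = c := by rw [← hbc.eq, ← mul_assoc, hcbc]
  have hc_right : b * (c * c) = c := by rw [← mul_assoc, hbc.eq, hcbc]
  -- both `x c` and `c x` equal `(b c) x c`
  have hxc : x * c = b * (c * (x * c)) :=
    calc x * c = b * (x * (c * c)) := by rw [← hx.left_comm, hc_right]
      _ = b * (c * (b * (x * (c * c)))) := by simp only [← mul_assoc, hbcb]
      _ = b * (c * (x * c)) := by rw [← hx.left_comm, hc_right]
  have hcx : c * x = b * (c * (x * c)) :=
    calc c * x = c * (c * (b * x)) := by simp only [← mul_assoc, hc_left]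
      _ = c * (c * (b * (x * (c * b)))) := by rw [← hx.left_comm, ← mul_assoc b, hbcb, hx.eq]
      _ = c * (x * (b * c)) := by rw [← mul_assoc c b, ← mul_assoc c (c * b), hc_left, hbc.eq]
      _ = b * (c * (x * c)) := by rw [hx.left_comm, hbc.left_comm]
  exact hxc.trans hcx.symm

namespace IsMP

variable {R : Type*} [Ring R] [StarRing R] {a b c : R}

protected theorem star (h : IsMP a b) : IsMP (star a) (star b) := by
  obtain ⟨h₁, h₂, h₃, h₄⟩ := h
  refine ⟨?_, ?_, ?_, ?_⟩
  · rw [← star_mul, ← star_mul, ← mul_assoc, h₁]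
  · rw [← star_mul, ← star_mul, ← mul_assoc, h₂]
  · rw [← star_mul, star_star, h₄]
  · rw [← star_mul, star_star, h₃]

theorem unique (hb : IsMP a b) (hc : IsMP a c) : b = c := by
  obtain ⟨hb₁, hb₂, hb₃, hb₄⟩ := hb
  obtain ⟨hc₁, hc₂, hc₃, hc₄⟩ := hc
  have hab : a * b = a * c :=
    calc a * b = star (a * c * (a * b)) := by rw [← mul_assoc, hc₁, hb₃]
      _ = a * c := by rw [star_mul, hb₃, hc₃, ← mul_assoc, hb₁]
  have hba : b * a = c * a :=
    calc b * a = star (b * a * (c * a)) := by rw [mul_assoc, ← mul_assoc a, hc₁, hb₄]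
      _ = c * a := by rw [star_mul, hb₄, hc₄, mul_assoc, ← mul_assoc a, hb₁]
  calc b = c * a * b := by rw [← hba, hb₂]
    _ = c := by rw [mul_assoc, hab, ← mul_assoc, hc₂]

theorem star_eq_of_isSelfAdjoint (ha : IsSelfAdjoint a) (h : IsMP a b) : star b = b :=
  (ha.star_eq ▸ h.star).unique h

theorem commute_of_isSelfAdjoint (ha : IsSelfAdjoint a) (h : IsMP a b) : Commute a b := by
  have hb := h.star_eq_of_isSelfAdjoint ha
  have h₄ := h.2.2.2
  rwa [star_mul, hb, ha.star_eq] at h₄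

theorem commute_mul_of_commute_mul_self (ha : IsSelfAdjoint a) (h : IsMP a b) {x : R}
    (hx : Commute x (a * a)) : Commute x (a * b) := by
  have hab := h.commute_of_isSelfAdjoint ha
  obtain ⟨h₁, h₂, -, -⟩ := h
  have hsq : a * a * (b * b) = a * b := by
    conv_lhs => rw [mul_assoc a a, ← mul_assoc a b b, hab.eq, h₂]
  -- `b * b` is the group inverse of `a * a`
  have hxb : Commute x (b * b) := by
    refine Commute.of_groupInverse ?_ ?_ ((hab.mul_right hab).mul_left (hab.mul_right hab)) hx
    · rw [hsq, ← mul_assoc, h₁]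
    · rw [mul_assoc, hsq, mul_assoc, ← mul_assoc b a, h₂]
  simpa only [hsq] using hx.mul_right hxb

end IsMP

theorem IsIdempotentElem.commute_sub_mul_self {R : Type*} [Ring R] {p q : R}
    (hp : IsIdempotentElem p) (hq : IsIdempotentElem q) : Commute q ((p - q) * (p - q)) := by
  unfold Commute SemiconjBy
  simp only [mul_sub, sub_mul, ← mul_assoc, hp.eq, hq.eq, hq.mul_mul_self]
  abel

theorem stmt11 {R : Type*} [Ring R] [StarRing R] (p q d : R)
    (hp : IsProjector p) (hq : IsProjector q)
    (hd : IsMP (p - q) d) :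
    q * ((p - q) * d) = ((p - q) * d) * q :=
  (hd.commute_mul_of_commute_mul_self (IsSelfAdjoint.sub hp.2 hq.2)
    (IsIdempotentElem.commute_sub_mul_self hp.1 hq.1)).eq
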